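/- arXiv:2305.11155 — 6 statements merged into one kernel-verified Lean document; each statement's English description precedes it below -/
import Mathlib

section
/- Let θ < κ be infinite regular cardinals and let e : [κ]² → θ be a subadditive coloring such that for every S ⊆ κ with |S| = κ, the set {e(α,β) : α < β, α,β ∈ S} is cofinal in θ. Then for every A ⊆ κ with |A| = κ, the set of γ < κ for which {e(α,γ) : α ∈ A ∩ γ} is cofinal in θ contains a club in κ. -/
/-!
For each color `i < θ`, the hypothesis applied to `A` itself gives `α < β` in `A` with
`i ≤ e(α,β)`; by subadditivity, every `δ > β` then satisfies `i ≤ e(α,δ)` or `i ≤ e(β,δ)`.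
Since `θ < κ` and `κ` is regular, these `β` are bounded below `κ` by a single `ε`, and the
tail `(ε, κ)` is the required club.
-/

open Cardinal Set

/-- `D` is a club in (the set of ordinals below) `o`: `D ⊆ o`, `D` is unbounded in `o`,
and `D` contains the supremum of each of its nonempty subsets that is bounded below `o`. -/
def IsClubIn (D : Set Ordinal) (o : Ordinal) : Prop :=
  D ⊆ Set.Iio o ∧ (∀ a < o, ∃ b ∈ D, a ≤ b) ∧
    (∀ S : Set Ordinal, S ⊆ D → S.Nonempty → sSup S < o → sSup S ∈ D)

/-- A coloring of pairs of ordinals below `κ` is subadditive. -/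
def SubadditiveOn (e : Ordinal → Ordinal → Ordinal) (κ : Ordinal) : Prop :=
  ∀ α β γ : Ordinal, α < β → β < γ → γ < κ →
    e α γ ≤ max (e α β) (e β γ) ∧ e α β ≤ max (e α γ) (e β γ)

theorem isClubIn_Ioo {ε o : Ordinal} (ho : Order.IsSuccLimit o) (hε : ε < o) :
    IsClubIn (Ioo ε o) o := by
  refine ⟨fun γ hγ => hγ.2, fun a ha => ?_, fun S hS ⟨x, hx⟩ hSo => ?_⟩
  · exact ⟨max a (Order.succ ε),
      ⟨(Order.lt_succ ε).trans_le (le_max_right _ _), max_lt ha (ho.succ_lt hε)⟩,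
      le_max_left _ _⟩
  · have hbdd : BddAbove S := ⟨o, fun y hy => (hS hy).2.le⟩
    exact ⟨(hS hx).1.trans_le (le_csSup hbdd hx), hSo⟩

theorem SubadditiveOn.exists_le_of_le_of_lt {e : Ordinal → Ordinal → Ordinal} {o : Ordinal}
    (he : SubadditiveOn e o) {A : Set Ordinal} {α β δ i : Ordinal} (hα : α ∈ A) (hβ : β ∈ A)
    (hαβ : α < β) (hi : i ≤ e α β) (hβδ : β < δ) (hδ : δ < o) :
    ∃ γ ∈ A, γ < δ ∧ i ≤ e γ δ := by
  by_contra! h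
  exact (hi.trans (he α β δ hαβ hβδ hδ).2).not_gt
    (max_lt (h α hα (hαβ.trans hβδ)) (h β hβ hβδ))

theorem exists_lt_ord_forall_le_of_isRegular {θ κ : Cardinal.{u}} (hκ : κ.IsRegular)
    (hθκ : θ < κ) (f : Ordinal.{u} → Ordinal.{u}) (hf : ∀ i < θ.ord, f i < κ.ord) :
    ∃ ε < κ.ord, ∀ i < θ.ord, f i ≤ ε := by
  refine ⟨⨆ i : Iio θ.ord, f i, ?_, fun i hi =>
    le_ciSup (f := fun i : Iio θ.ord => f i) Ordinal.bddAbove_of_small ⟨i, hi⟩⟩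
  refine Ordinal.lift_iSup_lt_of_lt_cof ?_ fun i => hf i i.2
  rwa [mk_Iio_ordinal, card_ord, ← Ordinal.lift_cof, hκ.cof_ord, lift_lift, lift_lt]

theorem cofinal_colors_on_club_general (θ κ : Cardinal.{0}) (hκ : κ.IsRegular)
    (hθκ : θ < κ) (e : Ordinal → Ordinal → Ordinal)
    (hsub : SubadditiveOn e κ.ord)
    (hU : ∀ S : Set Ordinal, S ⊆ Set.Iio κ.ord → #S = Cardinal.lift.{1} κ →
      ∀ i < θ.ord, ∃ α ∈ S, ∃ β ∈ S, α < β ∧ i ≤ e α β)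
    (A : Set Ordinal) (hA : A ⊆ Set.Iio κ.ord) (hAcard : #A = Cardinal.lift.{1} κ) :
    ∃ D : Set Ordinal, IsClubIn D κ.ord ∧
      ∀ γ ∈ D, ∀ i < θ.ord, ∃ α ∈ A, α < γ ∧ i ≤ e α γ := by
  choose! α hαA β hβA hαβ hiβ using hU A hA hAcard
  obtain ⟨ε, hε, hβε⟩ :=
    exists_lt_ord_forall_le_of_isRegular hκ hθκ β fun i hi => hA (hβA i hi)
  refine ⟨Ioo ε κ.ord, isClubIn_Ioo (isSuccLimit_ord hκ.aleph0_le) hε, ?_⟩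
  rintro γ ⟨hεγ, hγκ⟩ i hi
  exact hsub.exists_le_of_le_of_lt (hαA i hi) (hβA i hi) (hαβ i hi) (hiβ i hi)
    ((hβε i hi).trans_lt hεγ) hγκ

/-- Let `θ < κ` be infinite regular cardinals and let `e : [κ]² → θ` be a subadditive
coloring such that for every `S ⊆ κ` of full size the set `e“[S]²` is cofinal in `θ`.
Then for every `A ⊆ κ` of full size, the set of `γ < κ` for which
`{e(α,γ) : α ∈ A ∩ γ}` is cofinal in `θ` contains a club in `κ`. -/
theorem cofinal_colors_on_club (θ κ : Cardinal.{0}) (hθ : θ.IsRegular) (hκ : κ.IsRegular)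
    (hθκ : θ < κ) (e : Ordinal → Ordinal → Ordinal)
    (heran : ∀ α β : Ordinal, α < β → β < κ.ord → e α β < θ.ord)
    (hsub : SubadditiveOn e κ.ord)
    (hU : ∀ S : Set Ordinal, S ⊆ Set.Iio κ.ord → #S = Cardinal.lift.{1} κ →
      ∀ i < θ.ord, ∃ α ∈ S, ∃ β ∈ S, α < β ∧ i ≤ e α β)
    (A : Set Ordinal) (hA : A ⊆ Set.Iio κ.ord) (hAcard : #A = Cardinal.lift.{1} κ) :
    ∃ D : Set Ordinal, IsClubIn D κ.ord ∧
      ∀ γ ∈ D, ∀ i < θ.ord, ∃ α ∈ A, α < γ ∧ i ≤ e α γ :=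
  cofinal_colors_on_club_general θ κ hκ hθκ e hsub hU A hA hAcard
end

section
/- Let θ < κ be infinite regular cardinals. Suppose d : [κ]² → κ has the property that for every τ < κ and every pairwise disjoint family 𝒜 of κ many subsets of κ each of size θ, there exists ε < κ such that for every b ⊆ κ ∖ ε with |b| = θ there is a ∈ 𝒜 with a ⊆ ε and d(α,β) = τ for all α ∈ a and β ∈ b. Suppose e : [κ]² → θ is subadditive and for every S ⊆ κ with |S| = κ, the set {e(α,β) : α < β, α,β ∈ S} is cofinal in θ. Let π : κ → κ × κ be a bijection and set c = π ∘ d. Then for every A ⊆ κ with |A| = κ there exists a club D ⊆ κ such that for every δ ∈ D, every β ∈ κ ∖ δ, every pair (ξ₀, ξ₁) ∈ δ × δ, and every i < θ, there are cofinally many α < δ such that α ∈ A, c(α,β) = (ξ₀, ξ₁) and e(α,β) > i. -/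
open Cardinal Set

/-! Every full-size subset of `A` contains a `θ`-sized set on which `e` takes cofinally many
colours below `θ`; a recursion of length `κ` then yields, above any `η < κ`, `κ` pairwise disjoint
such sets. Feeding this family and the colour `π⁻¹(ξ₀, ξ₁)` to the strong colouring `d` gives a
threshold `ε(ξ₀, ξ₁, η) < κ`, and `D` is the club of ordinals closed under `ε`. Given `δ ∈ D` and
`β ≥ δ`, the threshold property applied to a `θ`-sized set of ordinals `≥ β` containing `β` yields
a good set `a ⊆ A ∩ [η, δ)` with `c(α, β) = (ξ₀, ξ₁)` for `α ∈ a`; choosing `α < α'` in `a` with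
`e(α, α') > i`, subadditivity forces `e(α, β) > i` or `e(α', β) > i`. -/

universe u

theorem Cardinal.IsRegular.iSup_lt_ord {κ : Cardinal.{u}} (hκ : κ.IsRegular) {ι : Type (u + 1)}
    {f : ι → Ordinal.{u}} (hι : #ι < Cardinal.lift.{u + 1} κ) (hf : ∀ i, f i < κ.ord) :
    ⨆ i, f i < κ.ord := by
  apply Ordinal.lift_iSup_lt_of_lt_cof _ hf
  rwa [Cardinal.lift_ord, hκ.lift.cof_ord, Cardinal.lift_id'.{u, u + 1}]

theorem Cardinal.IsRegular.sSup_lt_ord {κ : Cardinal.{u}} (hκ : κ.IsRegular) {s : Set Ordinal.{u}}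
    (hs : s ⊆ Iio κ.ord) (hcard : #s < Cardinal.lift.{u + 1} κ) : sSup s < κ.ord := by
  rw [sSup_eq_iSup']
  exact hκ.iSup_lt_ord hcard fun x => hs x.2

theorem mk_inter_Ici_eq {κ : Cardinal.{u}} (hκ : ℵ₀ ≤ κ) {A : Set Ordinal.{u}}
    (hA : #A = Cardinal.lift.{u + 1} κ) {B : Ordinal.{u}} (hB : B < κ.ord) :
    #(A ∩ Ici B : Set Ordinal) = Cardinal.lift.{u + 1} κ := by
  refine le_antisymm (hA ▸ mk_le_mk_of_subset inter_subset_left) (not_lt.1 fun h => ?_)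
  have hIio : #(Iio B) < Cardinal.lift.{u + 1} κ := by
    rw [mk_Iio_ordinal, lift_lt]; exact lt_ord.1 hB
  have hcover : A ⊆ (A ∩ Ici B) ∪ Iio B := fun x hx => by
    rcases le_or_gt B x with h | h
    exacts [Or.inl ⟨hx, h⟩, Or.inr h]
  have := (mk_le_mk_of_subset hcover).trans (mk_union_le _ _)
  exact this.not_gt (hA ▸ add_lt_of_lt (aleph0_le_lift.2 hκ) h hIio)

theorem exists_increasing_blocks {κ : Cardinal.{u}} (hκ : κ.IsRegular) {o : Ordinal.{u}}
    (ho : o ≤ κ.ord) (P : Ordinal.{u} → Set Ordinal.{u} → Prop)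
    (hP : ∀ j < o, ∀ B < κ.ord, ∃ s ⊆ Ico B κ.ord, #s < Cardinal.lift.{u + 1} κ ∧ P j s) :
    ∃ s : Ordinal.{u} → Set Ordinal.{u}, ∀ j < o, s j ⊆ Iio κ.ord ∧ P j (s j) ∧
      ∀ j' < j, ∀ x ∈ s j', ∀ y ∈ s j, x < y := by
  choose! S hS hScard hSP using hP
  let s : Ordinal.{u} → Set Ordinal.{u} :=
    wellFounded_lt.fix fun j s => S j (⨆ j' : Iio j, sSup (s j'.1 j'.2) + 1)
  set bound : Ordinal.{u} → Ordinal.{u} := fun j => ⨆ j' : Iio j, sSup (s j') + 1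
  have hs : ∀ j, s j = S j (bound j) := wellFounded_lt.fix_eq _
  have hbound : ∀ j < o, bound j < κ.ord := by
    intro j
    induction j using WellFoundedLT.induction with
    | _ j IH =>
      intro hj
      refine hκ.iSup_lt_ord ?_ fun ⟨j', hj'⟩ => ?_
      · rw [mk_Iio_ordinal, lift_lt]
        exact lt_ord.1 (hj.trans_le ho)
      · have hj'o : j' < o := hj'.trans hj
        have hsup : sSup (s j') < κ.ord := by
          rw [hs]
          exact hκ.sSup_lt_ord (fun x hx => (hS j' hj'o _ (IH j' hj' hj'o) hx).2)
            (hScard j' hj'o _ (IH j' hj' hj'o))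
        exact (isSuccLimit_ord hκ.aleph0_le).add_one_lt hsup
  have hsub : ∀ j < o, s j ⊆ Ico (bound j) κ.ord := fun j hj =>
    hs j ▸ hS j hj _ (hbound j hj)
  refine ⟨s, fun j hj => ⟨fun x hx => (hsub j hj hx).2, hs j ▸ hSP j hj _ (hbound j hj),
    fun j' hj' x hx y hy => ?_⟩⟩
  calc x ≤ sSup (s j') :=
        le_csSup ⟨κ.ord, fun z hz => (hsub j' (hj'.trans hj) hz).2.le⟩ hx
    _ < sSup (s j') + 1 := Order.lt_add_one_iff.2 le_rfl
    _ ≤ bound j := le_ciSup (f := fun j' : Iio j => sSup (s j') + 1)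
        Ordinal.bddAbove_of_small ⟨j', hj'⟩
    _ ≤ y := (hsub j hj hy).1

/-- `e“[s]²` is cofinal in `o`. -/
def ColorsCofinalOn (e : Ordinal → Ordinal → Ordinal) (s : Set Ordinal) (o : Ordinal) : Prop :=
  ∀ i < o, ∃ α ∈ s, ∃ β ∈ s, α < β ∧ i < e α β

theorem colorsCofinalOn_of_forall_le {e : Ordinal → Ordinal → Ordinal} {s : Set Ordinal}
    {o : Ordinal} (ho : Order.IsSuccLimit o)
    (h : ∀ i < o, ∃ α ∈ s, ∃ β ∈ s, α < β ∧ i ≤ e α β) : ColorsCofinalOn e s o := fun i hi => by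
  obtain ⟨α, hα, β, hβ, hαβ, he⟩ := h (i + 1) (ho.add_one_lt hi)
  exact ⟨α, hα, β, hβ, hαβ, Order.add_one_le_iff.1 he⟩

theorem exists_subset_colorsCofinalOn {θ κ : Cardinal.{u}} (hκ : κ.IsRegular) (hθ : ℵ₀ ≤ θ)
    (hθκ : θ < κ) {e : Ordinal.{u} → Ordinal.{u} → Ordinal.{u}} {A : Set Ordinal.{u}}
    (hA : A ⊆ Iio κ.ord) (hAcard : #A = Cardinal.lift.{u + 1} κ)
    (hU : ∀ S ⊆ A, #S = Cardinal.lift.{u + 1} κ → ColorsCofinalOn e S θ.ord) :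
    ∃ a ⊆ A, #a = Cardinal.lift.{u + 1} θ ∧ ColorsCofinalOn e a θ.ord := by
  obtain ⟨s, hs⟩ := exists_increasing_blocks hκ (ord_le_ord.2 hθκ.le)
    (fun j s => ∃ α β, s = {α, β} ∧ α ∈ A ∧ β ∈ A ∧ α < β ∧ j < e α β) <| by
      intro j hj B hB
      obtain ⟨α, hα, β, hβ, hαβ, hj⟩ :=
        hU _ inter_subset_left (mk_inter_Ici_eq hκ.aleph0_le hAcard hB) j hj
      refine ⟨{α, β}, ?_, (toFinite _).lt_aleph0.trans_le (aleph0_le_lift.2 hκ.aleph0_le),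
        α, β, rfl, hα.1, hβ.1, hαβ, hj⟩
      rintro x (rfl | rfl)
      exacts [⟨hα.2, hA hα.1⟩, ⟨hβ.2, hA hβ.1⟩]
  choose! α β hsαβ hαA hβA hαβ he using fun j hj => (hs j hj).2.1
  have hmono : StrictMonoOn α (Iio θ.ord) := fun j' hj' j hj h =>
    (hs j hj).2.2 j' h _ (by simp [hsαβ j' hj']) _ (by simp [hsαβ j hj])
  have hθ' : #(Iio θ.ord) = Cardinal.lift.{u + 1} θ := by rw [mk_Iio_ordinal, card_ord]
  refine ⟨α '' Iio θ.ord ∪ β '' Iio θ.ord, ?_, le_antisymm ?_ ?_,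
    fun i hi => ⟨α i, Or.inl ⟨i, hi, rfl⟩, β i, Or.inr ⟨i, hi, rfl⟩, hαβ i hi, he i hi⟩⟩
  · rintro x (⟨j, hj, rfl⟩ | ⟨j, hj, rfl⟩)
    exacts [hαA j hj, hβA j hj]
  · calc #(α '' Iio θ.ord ∪ β '' Iio θ.ord : Set Ordinal)
        ≤ #(α '' Iio θ.ord) + #(β '' Iio θ.ord) := mk_union_le _ _
      _ ≤ Cardinal.lift.{u + 1} θ + Cardinal.lift.{u + 1} θ :=
        add_le_add (hθ' ▸ mk_image_le) (hθ' ▸ mk_image_le)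
      _ = Cardinal.lift.{u + 1} θ := add_eq_self (aleph0_le_lift.2 hθ)
  · calc Cardinal.lift.{u + 1} θ = #(α '' Iio θ.ord) := by
          rw [mk_image_eq_of_injOn _ _ hmono.injOn, hθ']
      _ ≤ _ := mk_le_mk_of_subset subset_union_left

theorem exists_disjoint_family_of_unbounded {κ : Cardinal.{u}} (hκ : κ.IsRegular)
    {P : Set Ordinal.{u} → Prop}
    (hP : ∀ B < κ.ord, ∃ s ⊆ Ico B κ.ord, #s < Cardinal.lift.{u + 1} κ ∧ s.Nonempty ∧ P s) :
    ∃ 𝒜 : Set (Set Ordinal.{u}), (∀ a ∈ 𝒜, a ⊆ Iio κ.ord ∧ P a) ∧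
      (∀ a ∈ 𝒜, ∀ b ∈ 𝒜, a ≠ b → Disjoint a b) ∧ #𝒜 = Cardinal.lift.{u + 1} κ := by
  obtain ⟨s, hs⟩ := exists_increasing_blocks hκ le_rfl (fun _ s => s.Nonempty ∧ P s)
    fun _ _ B hB => hP B hB
  have hdisj : ∀ j ∈ Iio κ.ord, ∀ j' ∈ Iio κ.ord, j ≠ j' → Disjoint (s j) (s j') := by
    intro j hj j' hj' hne
    wlog h : j' < j generalizing j j'
    · exact (this j' hj' j hj hne.symm (hne.lt_or_gt.resolve_right h)).symm
    exact disjoint_left.2 fun x hx hx' => lt_irrefl x ((hs j hj).2.2 j' h x hx' x hx)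
  have hinj : InjOn s (Iio κ.ord) := fun j hj j' hj' h => by
    by_contra hne
    obtain ⟨x, hx⟩ := (hs j hj).2.1.1
    exact disjoint_left.1 (hdisj j hj j' hj' hne) hx (h ▸ hx)
  refine ⟨s '' Iio κ.ord, ?_, ?_, ?_⟩
  · rintro a ⟨j, hj, rfl⟩
    exact ⟨(hs j hj).1, (hs j hj).2.1.2⟩
  · rintro a ⟨j, hj, rfl⟩ b ⟨j', hj', rfl⟩ hne
    exact hdisj j hj j' hj' fun h => hne (h ▸ rfl)
  · rw [mk_image_eq_of_injOn _ _ hinj, mk_Iio_ordinal, card_ord]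

theorem isClubIn_setOf_forall_lt_le {κ : Cardinal.{u}} (hκ : κ.IsRegular) (hκ' : κ ≠ ℵ₀)
    {g : Ordinal.{u} → Ordinal.{u}} (hg : ∀ ζ < κ.ord, g ζ < κ.ord) :
    IsClubIn {δ | δ < κ.ord ∧ ∀ ζ < δ, g ζ ≤ δ} κ.ord := by
  refine ⟨fun δ hδ => hδ.1, fun x hx => ?_, fun S hS hne hlt => ⟨hlt, fun ζ hζ => ?_⟩⟩
  · set G : Ordinal.{u} → Ordinal.{u} := fun y => ⨆ ζ : Iio y, g ζ
    have hG : ∀ y < κ.ord, G y < κ.ord := fun y hy =>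
      hκ.iSup_lt_ord (by rw [mk_Iio_ordinal, lift_lt]; exact lt_ord.1 hy)
        fun ζ => hg ζ (ζ.2.trans hy)
    refine ⟨Ordinal.nfp G x, ⟨Cardinal.nfp_lt_ord_of_isRegular hκ hκ' hG hx, fun ζ hζ => ?_⟩,
      Ordinal.le_nfp G x⟩
    obtain ⟨n, hn⟩ := Ordinal.lt_nfp_iff.1 hζ
    calc g ζ ≤ G (G^[n] x) :=
          le_ciSup (f := fun ζ : Iio _ => g ζ) Ordinal.bddAbove_of_small ⟨ζ, hn⟩
      _ = G^[n + 1] x := (Function.iterate_succ_apply' G n x).symm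
      _ ≤ Ordinal.nfp G x := Ordinal.iterate_le_nfp G x (n + 1)
  · have hbdd : BddAbove S := ⟨κ.ord, fun s hs => (hS hs).1.le⟩
    obtain ⟨s, hs, hζs⟩ := (lt_csSup_iff hbdd hne).1 hζ
    exact ((hS hs).2 ζ hζs).trans (le_csSup hbdd hs)

theorem exists_isClubIn_forall_lt_exists_le {κ : Cardinal.{u}} (hκ : κ.IsRegular) (hκ' : κ ≠ ℵ₀)
    {Q : Ordinal.{u} → Ordinal.{u} → Ordinal.{u} → Ordinal.{u} → Prop}
    (hQ : ∀ x < κ.ord, ∀ y < κ.ord, ∀ z < κ.ord, ∃ w < κ.ord, Q x y z w) :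
    ∃ D, IsClubIn D κ.ord ∧ ∀ δ ∈ D, ∀ x < δ, ∀ y < δ, ∀ z < δ, ∃ w ≤ δ, Q x y z w := by
  choose! W hW hQW using hQ
  set g : Ordinal.{u} → Ordinal.{u} := fun ζ => ⨆ t : Iic ζ × Iic ζ × Iic ζ, W t.1 t.2.1 t.2.2
  have hg : ∀ ζ < κ.ord, g ζ < κ.ord := fun ζ hζ => by
    have hζ' : Order.succ ζ < κ.ord := (isSuccLimit_ord hκ.aleph0_le).succ_lt hζ
    have hIic : #(Iic ζ) < Cardinal.lift.{u + 1} κ := by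
      rw [← Order.Iio_succ, mk_Iio_ordinal, lift_lt]
      exact lt_ord.1 hζ'
    have hκ₀ : ℵ₀ ≤ Cardinal.lift.{u + 1} κ := aleph0_le_lift.2 hκ.aleph0_le
    refine hκ.iSup_lt_ord ?_ fun t => hW _ (t.1.2.trans_lt hζ) _ (t.2.1.2.trans_lt hζ) _
      (t.2.2.2.trans_lt hζ)
    simp only [mk_prod, lift_id]
    exact mul_lt_of_lt hκ₀ hIic (mul_lt_of_lt hκ₀ hIic hIic)
  refine ⟨_, isClubIn_setOf_forall_lt_le hκ hκ' hg, fun δ hδ x hx y hy z hz =>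
    ⟨W x y z, ?_, hQW x (hx.trans hδ.1) y (hy.trans hδ.1) z (hz.trans hδ.1)⟩⟩
  obtain ⟨ζ, hxζ, hyζ, hzζ, hζ⟩ : ∃ ζ, x ≤ ζ ∧ y ≤ ζ ∧ z ≤ ζ ∧ ζ < δ :=
    ⟨max (max x y) z, by simp, by simp, by simp, max_lt (max_lt hx hy) hz⟩
  calc W x y z ≤ g ζ := le_ciSup (f := fun t : Iic ζ × Iic ζ × Iic ζ => W t.1 t.2.1 t.2.2)
        Ordinal.bddAbove_of_small ⟨⟨x, hxζ⟩, ⟨y, hyζ⟩, ⟨z, hzζ⟩⟩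
    _ ≤ δ := hδ.2 ζ hζ

theorem exists_disjoint_family_colorsCofinalOn {θ κ : Cardinal.{u}} (hκ : κ.IsRegular)
    (hθ : ℵ₀ ≤ θ) (hθκ : θ < κ) {e : Ordinal.{u} → Ordinal.{u} → Ordinal.{u}}
    {A : Set Ordinal.{u}} (hA : A ⊆ Iio κ.ord) (hAcard : #A = Cardinal.lift.{u + 1} κ)
    (hU : ∀ S ⊆ A, #S = Cardinal.lift.{u + 1} κ → ColorsCofinalOn e S θ.ord)
    {η : Ordinal.{u}} (hη : η < κ.ord) :
    ∃ 𝒜 : Set (Set Ordinal.{u}), (∀ a ∈ 𝒜, a ⊆ Iio κ.ord ∧ #a = Cardinal.lift.{u + 1} θ) ∧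
      (∀ a ∈ 𝒜, ∀ b ∈ 𝒜, a ≠ b → Disjoint a b) ∧ #𝒜 = Cardinal.lift.{u + 1} κ ∧
      ∀ a ∈ 𝒜, a ⊆ A ∩ Ici η ∧ ColorsCofinalOn e a θ.ord := by
  obtain ⟨𝒜, h𝒜, hdisj, hcard⟩ := exists_disjoint_family_of_unbounded hκ
    (P := fun a => #a = Cardinal.lift.{u + 1} θ ∧ a ⊆ A ∩ Ici η ∧ ColorsCofinalOn e a θ.ord)
    fun B hB => by
      obtain ⟨a, ha, hacard, hcof⟩ := exists_subset_colorsCofinalOn hκ hθ hθκ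
        (fun x hx => hA hx.1) (mk_inter_Ici_eq hκ.aleph0_le hAcard (max_lt hB hη))
        fun S hS => hU S (hS.trans inter_subset_left)
      have hane : a.Nonempty := by
        rw [← nonempty_coe_sort, ← mk_ne_zero_iff, hacard, ne_eq, lift_eq_zero]
        exact (aleph0_pos.trans_le hθ).ne'
      refine ⟨a, fun x hx => ⟨(le_max_left B η).trans (ha hx).2, hA (ha hx).1⟩,
        hacard.trans_lt (lift_lt.2 hθκ), hane, hacard,
        fun x hx => ⟨(ha hx).1, mem_Ici.2 ((le_max_right B η).trans (ha hx).2)⟩, hcof⟩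
  exact ⟨𝒜, fun a ha => ⟨(h𝒜 a ha).1, (h𝒜 a ha).2.1⟩, hdisj, hcard,
    fun a ha => (h𝒜 a ha).2.2⟩

theorem ColorsCofinalOn.exists_lt_of_subadditiveOn {e : Ordinal → Ordinal → Ordinal}
    {κ o i β : Ordinal} (hsub : SubadditiveOn e κ) {a : Set Ordinal} (ha : ColorsCofinalOn e a o)
    (haβ : ∀ α ∈ a, α < β) (hβ : β < κ) (hi : i < o) : ∃ α ∈ a, i < e α β := by
  obtain ⟨α, hα, α', hα', hαα', he⟩ := ha i hi
  rcases lt_max_iff.1 (he.trans_le (hsub α α' β hαα' (haβ α' hα') hβ).2) with h | h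
  exacts [⟨α, hα, h⟩, ⟨α', hα', h⟩]

theorem exists_mem_subset_Ici_mk_eq {θ κ : Cardinal.{u}} (hθ : ℵ₀ ≤ θ) (hθκ : θ < κ)
    {β : Ordinal.{u}} (hβ : β < κ.ord) :
    ∃ b ⊆ Iio κ.ord, β ∈ b ∧ b ⊆ Ici β ∧ #b = Cardinal.lift.{u + 1} θ := by
  refine ⟨(β + ·) '' Iio θ.ord, ?_, ⟨0, ?_, add_zero β⟩, ?_, ?_⟩
  · rintro x ⟨j, hj, rfl⟩
    exact Ordinal.isPrincipal_add_ord (hθ.trans hθκ.le) hβ (hj.trans (ord_lt_ord.2 hθκ))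
  · exact (isSuccLimit_ord hθ).bot_lt
  · rintro x ⟨j, -, rfl⟩
    exact le_add_right (le_refl β)
  · rw [mk_image_eq_of_injOn _ _ fun j _ j' _ h => add_left_cancel h, mk_Iio_ordinal, card_ord]

theorem colorings_from_pr1_and_unbounded_general (θ κ : Cardinal.{0}) (hθ : θ.IsRegular)
    (hκ : κ.IsRegular) (hθκ : θ < κ)
    (d : Ordinal → Ordinal → Ordinal)
    (hd : ∀ τ < κ.ord, ∀ 𝒜 : Set (Set Ordinal),
      (∀ a ∈ 𝒜, a ⊆ Set.Iio κ.ord ∧ #a = Cardinal.lift.{1} θ) →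
      (∀ a ∈ 𝒜, ∀ b ∈ 𝒜, a ≠ b → Disjoint a b) →
      #𝒜 = Cardinal.lift.{1} κ →
      ∃ ε < κ.ord, ∀ b : Set Ordinal, b ⊆ Set.Iio κ.ord → (∀ x ∈ b, ε ≤ x) →
        #b = Cardinal.lift.{1} θ →
        ∃ a ∈ 𝒜, a ⊆ Set.Iio ε ∧ ∀ α ∈ a, ∀ β ∈ b, d α β = τ)
    (e : Ordinal → Ordinal → Ordinal)
    (hsub : SubadditiveOn e κ.ord)
    (hU : ∀ S : Set Ordinal, S ⊆ Set.Iio κ.ord → #S = Cardinal.lift.{1} κ →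
      ∀ i < θ.ord, ∃ α ∈ S, ∃ β ∈ S, α < β ∧ i ≤ e α β)
    (π : Ordinal → Ordinal × Ordinal)
    (hπ : Set.BijOn π (Set.Iio κ.ord) (Set.Iio κ.ord ×ˢ Set.Iio κ.ord))
    (c : Ordinal → Ordinal → Ordinal × Ordinal)
    (hc : ∀ α β : Ordinal, c α β = π (d α β)) :
    ∀ A : Set Ordinal, A ⊆ Set.Iio κ.ord → #A = Cardinal.lift.{1} κ →
      ∃ D : Set Ordinal, IsClubIn D κ.ord ∧
        ∀ δ ∈ D, ∀ β : Ordinal, δ ≤ β → β < κ.ord →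
          ∀ ξ₀ < δ, ∀ ξ₁ < δ, ∀ i < θ.ord, ∀ η < δ,
            ∃ α : Ordinal, η ≤ α ∧ α < δ ∧ α ∈ A ∧ c α β = (ξ₀, ξ₁) ∧ i < e α β := by
  intro A hA hAcard
  have hθ₀ := hθ.aleph0_le
  have hUA : ∀ S ⊆ A, #S = Cardinal.lift.{1} κ → ColorsCofinalOn e S θ.ord := fun S hS hS' =>
    colorsCofinalOn_of_forall_le (isSuccLimit_ord hθ₀) (hU S (hS.trans hA) hS')
  obtain ⟨D, hD, hDε⟩ := exists_isClubIn_forall_lt_exists_le hκ (hθ₀.trans_lt hθκ).ne'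
    (Q := fun ξ₀ ξ₁ η ε => ∀ b ⊆ Iio κ.ord, (∀ x ∈ b, ε ≤ x) → #b = Cardinal.lift.{1} θ →
      ∃ a ⊆ A ∩ Ici η, a ⊆ Iio ε ∧ ColorsCofinalOn e a θ.ord ∧
        ∀ α ∈ a, ∀ β ∈ b, c α β = (ξ₀, ξ₁)) <| by
    intro ξ₀ hξ₀ ξ₁ hξ₁ η hη
    obtain ⟨τ, hτ, hπτ⟩ := hπ.surjOn (mk_mem_prod hξ₀ hξ₁)
    obtain ⟨𝒜, h𝒜, hdisj, hcard, hgood⟩ :=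
      exists_disjoint_family_colorsCofinalOn hκ hθ₀ hθκ hA hAcard hUA hη
    obtain ⟨ε, hε, hεb⟩ := hd τ hτ 𝒜 h𝒜 hdisj hcard
    refine ⟨ε, hε, fun b hb hbε hbθ => ?_⟩
    obtain ⟨a, ha, haε, hda⟩ := hεb b hb hbε hbθ
    exact ⟨a, (hgood a ha).1, haε, (hgood a ha).2,
      fun α hα β hβ => by rw [hc, hda α hα β hβ, hπτ]⟩
  refine ⟨D, hD, fun δ hδ β hδβ hβ ξ₀ hξ₀ ξ₁ hξ₁ i hi η hη => ?_⟩
  obtain ⟨ε, hεδ, hε⟩ := hDε δ hδ ξ₀ hξ₀ ξ₁ hξ₁ η hη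
  obtain ⟨b, hb, hβb, hbβ, hbθ⟩ := exists_mem_subset_Ici_mk_eq hθ₀ hθκ hβ
  obtain ⟨a, haA, haε, hcof, hca⟩ :=
    hε b hb (fun x hx => hεδ.trans (hδβ.trans (hbβ hx))) hbθ
  obtain ⟨α, hα, hi⟩ := hcof.exists_lt_of_subadditiveOn hsub
    (fun α hα => (haε hα).trans_le (hεδ.trans hδβ)) hβ hi
  exact ⟨α, (haA hα).2, (haε hα).trans_le hεδ, (haA hα).1, hca α hα β hβb, hi⟩

/-- Let `θ < κ` be infinite regular cardinals, `d : [κ]² → κ` a strong coloring (a witness to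
`pr₁(κ,κ,κ,θ⁺)`-type behaviour), `e : [κ]² → θ` subadditive with `e“[S]²` cofinal in `θ`
for every `S ⊆ κ` of full size, `π : κ ↔ κ × κ` a bijection and `c = π ∘ d`. Then for every
`A ⊆ κ` of full size there is a club `D ⊆ κ` such that for every `δ ∈ D`, every `β ∈ κ ∖ δ`,
every `(ξ₀,ξ₁) ∈ δ × δ` and every `i < θ`, there are cofinally many `α < δ` with `α ∈ A`,
`c(α,β) = (ξ₀,ξ₁)` and `e(α,β) > i`. -/
theorem colorings_from_pr1_and_unbounded (θ κ : Cardinal.{0}) (hθ : θ.IsRegular)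
    (hκ : κ.IsRegular) (hθκ : θ < κ)
    (d : Ordinal → Ordinal → Ordinal)
    (hdran : ∀ α β : Ordinal, α < β → β < κ.ord → d α β < κ.ord)
    (hd : ∀ τ < κ.ord, ∀ 𝒜 : Set (Set Ordinal),
      (∀ a ∈ 𝒜, a ⊆ Set.Iio κ.ord ∧ #a = Cardinal.lift.{1} θ) →
      (∀ a ∈ 𝒜, ∀ b ∈ 𝒜, a ≠ b → Disjoint a b) →
      #𝒜 = Cardinal.lift.{1} κ →
      ∃ ε < κ.ord, ∀ b : Set Ordinal, b ⊆ Set.Iio κ.ord → (∀ x ∈ b, ε ≤ x) →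
        #b = Cardinal.lift.{1} θ →
        ∃ a ∈ 𝒜, a ⊆ Set.Iio ε ∧ ∀ α ∈ a, ∀ β ∈ b, d α β = τ)
    (e : Ordinal → Ordinal → Ordinal)
    (heran : ∀ α β : Ordinal, α < β → β < κ.ord → e α β < θ.ord)
    (hsub : SubadditiveOn e κ.ord)
    (hU : ∀ S : Set Ordinal, S ⊆ Set.Iio κ.ord → #S = Cardinal.lift.{1} κ →
      ∀ i < θ.ord, ∃ α ∈ S, ∃ β ∈ S, α < β ∧ i ≤ e α β)
    (π : Ordinal → Ordinal × Ordinal)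
    (hπ : Set.BijOn π (Set.Iio κ.ord) (Set.Iio κ.ord ×ˢ Set.Iio κ.ord))
    (c : Ordinal → Ordinal → Ordinal × Ordinal)
    (hc : ∀ α β : Ordinal, c α β = π (d α β)) :
    ∀ A : Set Ordinal, A ⊆ Set.Iio κ.ord → #A = Cardinal.lift.{1} κ →
      ∃ D : Set Ordinal, IsClubIn D κ.ord ∧
        ∀ δ ∈ D, ∀ β : Ordinal, δ ≤ β → β < κ.ord →
          ∀ ξ₀ < δ, ∀ ξ₁ < δ, ∀ i < θ.ord, ∀ η < δ,
            ∃ α : Ordinal, η ≤ α ∧ α < δ ∧ α ∈ A ∧ c α β = (ξ₀, ξ₁) ∧ i < e α β :=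
  colorings_from_pr1_and_unbounded_general θ κ hθ hκ hθκ d hd e hsub hU π hπ c hc
end

section
/- Let H ≤ K and H ≤ L be groups with K ∩ L = H. Suppose g*₀ g*₁ ⋯ g*_{n−1} and g**₀ g**₁ ⋯ g**_{m−1} are canonical forms representing the same element of K *_H L. Then n = m, and there exist h₀, h₁, …, h_n ∈ H with h₀ = h_n = 1 such that g**_i = h_i⁻¹ g*_i h_{i+1} for every i < n. -/
open Pointwise

section AmalgamDefs

variable {M : Type*} [Group M]

/-- A list `l` of elements of `M` is a canonical form with respect to the subgroups `K`, `L`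
(with `H = K ⊓ L`): either it has length one and its entry lies in `K ∪ L`, or it has length
`> 1`, all entries lie in `(K ∪ L) ∖ H`, and consecutive entries alternate between `K` and
`L`. -/
def IsCanonicalForm (K L : Subgroup M) (l : List M) : Prop :=
  (∀ x ∈ l, x ∈ (K : Set M) ∪ (L : Set M)) ∧
    (l.length = 1 ∨
      (1 < l.length ∧ (∀ x ∈ l, x ∉ K ⊓ L) ∧
        ∀ i : ℕ, i + 1 < l.length → (l.getD i 1 ∈ K ↔ l.getD (i + 1) 1 ∈ L)))

/-- `M` is the free product of its subgroups `K` and `L` amalgamated over `H = K ⊓ L`: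
`K` and `L` generate `M`, and no alternating word of length at least two in elements of
`(K ∖ H) ∪ (L ∖ H)` represents the identity. -/
def IsAmalgam (K L : Subgroup M) : Prop :=
  K ⊔ L = ⊤ ∧ ∀ l : List M, IsCanonicalForm K L l → 2 ≤ l.length → l.prod ≠ 1

/-- `g` and `g'` are good fellows over `H` if `g ∉ H g' H` and `g ∉ H g'⁻¹ H`. -/
def GoodFellows (H : Subgroup M) (g g' : M) : Prop :=
  (∀ h₁ ∈ H, ∀ h₂ ∈ H, g ≠ h₁ * g' * h₂) ∧ ∀ h₁ ∈ H, ∀ h₂ ∈ H, g ≠ h₁ * g'⁻¹ * h₂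

/-- `H` is a malnormal subgroup of `L` (both being subgroups of an ambient group). -/
def MalnormalIn (H L : Subgroup M) : Prop :=
  ∀ h ∈ H, h ≠ 1 → ∀ g ∈ L, g ∉ H → g⁻¹ * h * g ∉ H

/-- `H` is a malnormal subgroup of the whole group. -/
def Malnormal (H : Subgroup M) : Prop :=
  ∀ h ∈ H, h ≠ 1 → ∀ g : M, g ∉ H → g⁻¹ * h * g ∉ H

/-- A weakly cyclically reduced canonical form: length one, or even length, or the product of
the last and the first entries is not in `H = K ⊓ L`. -/
def IsWCRForm (K L : Subgroup M) (l : List M) : Prop :=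
  IsCanonicalForm K L l ∧
    (l.length = 1 ∨ Even l.length ∨ ∀ h : l ≠ [], l.getLast h * l.head h ∉ K ⊓ L)

/-- `R` is symmetrized: closed under inverses and under weakly cyclically reduced
conjugates. -/
def Symmetrized (K L : Subgroup M) (R : Set M) : Prop :=
  (∀ g ∈ R, g⁻¹ ∈ R) ∧
    ∀ g ∈ R, ∀ x : M, ∀ l : List M, IsWCRForm K L l → l.prod = x * g * x⁻¹ → x * g * x⁻¹ ∈ R

/-- The symmetrized closure of a set: the smallest symmetrized set containing it. -/
def SymmClosure (K L : Subgroup M) (B : Set M) : Set M :=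
  ⋂₀ {R : Set M | Symmetrized K L R ∧ B ⊆ R}

/-- The small cancellation condition `C'(χ)` for a subset `X` of the amalgam: if
`g*_{n-1} ⋯ g*_0` and `g**_0 ⋯ g**_{m-1}` are canonical forms of elements of `X` whose
product is not `1`, and the length-`ℓ` tail of the first cancels with the length-`ℓ`
head of the second into `H = K ⊓ L` (with `ℓ < n, m`), then `ℓ < min(n,m)·χ`. -/
def SmallCancellation (K L : Subgroup M) (χ : ℝ) (X : Set M) : Prop :=
  ∀ a b : List M, IsCanonicalForm K L a → IsCanonicalForm K L b →
    a.prod ∈ X → b.prod ∈ X → a.prod * b.prod ≠ 1 →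
    ∀ ℓ : ℕ, ℓ < a.length → ℓ < b.length →
      (a.drop (a.length - ℓ)).prod * (b.take ℓ).prod ∈ K ⊓ L →
      (ℓ : ℝ) < (min a.length b.length : ℕ) * χ

/-- The word `w` (a canonical form) is a part of the group element `g`: it occurs as a
consecutive subword of a canonical representation of some weakly cyclically reduced
conjugate of `g`. -/
def IsPart (K L : Subgroup M) (w : List M) (g : M) : Prop :=
  IsCanonicalForm K L w ∧
    ∃ (x : M) (v : List M), IsWCRForm K L v ∧ v.prod = x * g * x⁻¹ ∧ w <:+: v

/-- The word `ρ(x,y) = x y x² y x³ y ⋯ x⁸⁰ y` (of length `3320`). -/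
def rhoWord (x y : M) : M :=
  ((List.range 80).map fun k => x ^ (k + 1) * y).prod

/-- The canonical projection onto the quotient by the normal closure of `R`. -/
def amalgProj (R : Set M) : M →* M ⧸ Subgroup.normalClosure R :=
  QuotientGroup.mk' _

end AmalgamDefs

/-!
Read the two forms from the left. Call a word reduced if its letters lie in `(K ∪ L) ∖ H`
and consecutive letters lie in different factors; in an amalgam no nonempty reduced word
represents `1`, hence none represents an element of `H`. If `x :: t₁` and `y :: t₂` are reduced
with `x t₁ = h y t₂` for some `h ∈ H`, then `x⁻¹ h y ∈ H`: otherwise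
`t₂⁻¹ (y⁻¹ h⁻¹ x) t₁` (when `x`, `y` lie in the same factor) or `t₂⁻¹ y⁻¹ (h⁻¹ x) t₁`
(when they do not) is a nonempty reduced word representing `1`. So the first letters agree
up to `H` on both sides, and `x⁻¹ h y` is passed on to the remaining letters.
-/

section ReducedWords

variable {M : Type*} [Group M]

def IsReducedWord (K L : Subgroup M) (l : List M) : Prop :=
  (∀ x ∈ l, Xor (x ∈ K) (x ∈ L)) ∧ l.IsChain fun x y => Xor (x ∈ K) (y ∈ K)

/-- `Interleaved H h₀ l₁ l₂`: there are `h₀, …, h_n ∈ H` with `h_n = 1` and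
`l₂[i] = h_i⁻¹ * l₁[i] * h_{i+1}`; the constructor `cons` reads off `h₁ = x⁻¹ * h₀ * y`. -/
inductive Interleaved (H : Subgroup M) : M → List M → List M → Prop
  | nil : Interleaved H 1 [] []
  | cons {h x y : M} {l₁ l₂ : List M} :
      h ∈ H → Interleaved H (x⁻¹ * h * y) l₁ l₂ → Interleaved H h (x :: l₁) (y :: l₂)

variable {K L H : Subgroup M}

theorem mem_iff_of_inv_mul_mul_notMem_inf {x y h : M} (hx : Xor (x ∈ K) (x ∈ L))
    (hy : Xor (y ∈ K) (y ∈ L)) (hxy : x ∈ K ↔ y ∈ K) (hh : h ∈ K ⊓ L)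
    (hg : x⁻¹ * h * y ∉ K ⊓ L) : (x⁻¹ * h * y ∈ K ↔ y ∈ K) ∧ (x⁻¹ * h * y ∈ L ↔ y ∈ L) := by
  have hK : x ∈ K → y ∈ K → x⁻¹ * h * y ∈ K := fun hxK hyK =>
    mul_mem (mul_mem (inv_mem hxK) hh.1) hyK
  have hL : x ∈ L → y ∈ L → x⁻¹ * h * y ∈ L := fun hxL hyL =>
    mul_mem (mul_mem (inv_mem hxL) hh.2) hyL
  grind [Subgroup.mem_inf, SetLike.mem_coe]

namespace IsReducedWord

theorem cons {x : M} {l : List M} (hx : Xor (x ∈ K) (x ∈ L))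
    (hhead : ∀ y ∈ l.head?, Xor (x ∈ K) (y ∈ K)) (hl : IsReducedWord K L l) :
    IsReducedWord K L (x :: l) :=
  ⟨List.forall_mem_cons.2 ⟨hx, hl.1⟩, List.isChain_cons.2 ⟨hhead, hl.2⟩⟩

theorem of_cons {x : M} {l : List M} (h : IsReducedWord K L (x :: l)) :
    Xor (x ∈ K) (x ∈ L) ∧ (∀ y ∈ l.head?, Xor (x ∈ K) (y ∈ K)) ∧ IsReducedWord K L l :=
  ⟨h.1 x List.mem_cons_self, (List.isChain_cons.1 h.2).1,
    fun y hy => h.1 y (List.mem_cons_of_mem x hy), (List.isChain_cons.1 h.2).2⟩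

theorem cons_of_mem_iff {x x' : M} {l : List M} (h : IsReducedWord K L (x :: l))
    (hK : x' ∈ K ↔ x ∈ K) (hL : x' ∈ L ↔ x ∈ L) : IsReducedWord K L (x' :: l) := by
  obtain ⟨hx, hhead, hl⟩ := h.of_cons
  exact cons (by rwa [hK, hL]) (by simpa only [hK] using hhead) hl

theorem mul_cons {h x : M} {l : List M} (hl : IsReducedWord K L (x :: l)) (hh : h ∈ K ⊓ L) :
    IsReducedWord K L (h * x :: l) :=
  hl.cons_of_mem_iff (K.mul_mem_cancel_left hh.1) (L.mul_mem_cancel_left hh.2)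

theorem append {l₁ l₂ : List M} (h₁ : IsReducedWord K L l₁) (h₂ : IsReducedWord K L l₂)
    (hlink : ∀ x ∈ l₁.getLast?, ∀ y ∈ l₂.head?, Xor (x ∈ K) (y ∈ K)) :
    IsReducedWord K L (l₁ ++ l₂) :=
  ⟨List.forall_mem_append.2 ⟨h₁.1, h₂.1⟩, List.isChain_append.2 ⟨h₁.2, h₂.2, hlink⟩⟩

theorem reverse_inv {l : List M} (h : IsReducedWord K L l) :
    IsReducedWord K L (l.map (·⁻¹)).reverse := by
  refine ⟨?_, ?_⟩
  · simp only [List.mem_reverse, List.mem_map]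
    rintro _ ⟨x, hx, rfl⟩
    simpa only [inv_mem_iff] using h.1 x hx
  · rw [List.isChain_reverse, List.isChain_map]
    exact h.2.imp fun x y hxy => by rw [inv_mem_iff, inv_mem_iff, _root_.xor_comm]; exact hxy

theorem isCanonicalForm {l : List M} (h : IsReducedWord K L l) (hlen : 1 < l.length) :
    IsCanonicalForm K L l := by
  refine ⟨fun x hx => (h.1 x hx).or, .inr ⟨hlen, fun x hx hH => ?_, fun i hi => ?_⟩⟩
  · have := h.1 x hx
    grind [Subgroup.mem_inf, SetLike.mem_coe]
  · have hchain := List.isChain_iff_getElem.1 h.2 i hi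
    have hnext := h.1 _ (List.getElem_mem hi)
    rw [List.getD_eq_getElem _ _ (by omega), List.getD_eq_getElem _ _ hi]
    grind

theorem prod_ne_one (amalg : IsAmalgam K L) {l : List M} (h : IsReducedWord K L l)
    (hne : l ≠ []) : l.prod ≠ 1 := by
  obtain hlen | hlen := Nat.lt_or_ge 1 l.length
  · exact amalg.2 l (h.isCanonicalForm hlen) hlen
  · obtain ⟨x, rfl⟩ := List.length_eq_one_iff.1
      (le_antisymm hlen (List.length_pos_iff.2 hne))
    have hx := h.1 x List.mem_cons_self
    rw [List.prod_singleton]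
    rintro rfl
    grind [one_mem]

theorem prod_notMem_inf (amalg : IsAmalgam K L) {l : List M} (h : IsReducedWord K L l)
    (hne : l ≠ []) : l.prod ∉ K ⊓ L := by
  intro hmem
  obtain ⟨x, t, rfl⟩ := List.exists_cons_of_ne_nil hne
  refine (h.mul_cons (inv_mem hmem)).prod_ne_one amalg (List.cons_ne_nil _ _) ?_
  rw [List.prod_cons, mul_assoc, ← List.prod_cons, inv_mul_cancel]

theorem prod_ne_prod_cons (amalg : IsAmalgam K L) {u v : List M} {y : M}
    (hu : IsReducedWord K L u) (hv : IsReducedWord K L (y :: v))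
    (hlink : ∀ x ∈ u.head?, Xor (x ∈ K) (y ∈ K)) : u.prod ≠ (y :: v).prod := by
  intro heq
  refine (hu.reverse_inv.append hv ?_).prod_ne_one amalg (by simp) ?_
  · intro x hx z hz
    cases u with
    | nil => simp at hx
    | cons a u =>
      simp only [List.map_cons, List.reverse_cons, List.getLast?_append, List.getLast?_singleton,
        Option.some_or, Option.mem_def, Option.some.injEq, List.head?_cons] at hx hz hlink
      subst hx hz
      simpa only [inv_mem_iff] using hlink a rfl
  · rw [List.prod_append, ← List.prod_inv_reverse, heq, inv_mul_cancel]

theorem inv_mul_mul_mem_inf (amalg : IsAmalgam K L) {x y h : M} {t₁ t₂ : List M}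
    (h₁ : IsReducedWord K L (x :: t₁)) (h₂ : IsReducedWord K L (y :: t₂)) (hh : h ∈ K ⊓ L)
    (heq : (x :: t₁).prod = h * (y :: t₂).prod) : x⁻¹ * h * y ∈ K ⊓ L := by
  obtain ⟨hx, hxt, ht₁⟩ := h₁.of_cons
  have hy := h₂.of_cons.1
  by_contra hg
  by_cases hxy : x ∈ K ↔ y ∈ K
  · obtain ⟨hgK, hgL⟩ := mem_iff_of_inv_mul_mul_notMem_inf hx hy hxy hh hg
    refine ht₁.prod_ne_prod_cons amalg (h₂.cons_of_mem_iff hgK hgL) (fun z hz => ?_) ?_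
    · have := hxt z hz
      grind
    · simp only [List.prod_cons] at heq ⊢
      rw [mul_assoc, mul_assoc, ← heq]
      group
  · refine h₁.prod_ne_prod_cons amalg (h₂.mul_cons hh) (fun z hz => ?_) ?_
    · obtain rfl : x = z := by simpa using hz
      rw [K.mul_mem_cancel_left hh.1]
      grind
    · rw [heq, List.prod_cons, List.prod_cons, mul_assoc]

theorem interleaved_of_prod_eq (amalg : IsAmalgam K L) :
    ∀ {l₁ l₂ : List M} {h : M}, IsReducedWord K L l₁ → IsReducedWord K L l₂ → h ∈ K ⊓ L →
      l₁.prod = h * l₂.prod → Interleaved (K ⊓ L) h l₁ l₂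
  | [], [], h, _, _, _, heq => by
    obtain rfl : h = 1 := by simpa using heq.symm
    exact .nil
  | [], y :: t₂, h, _, h₂, hh, heq => by
    refine absurd ?_ (h₂.prod_notMem_inf amalg (List.cons_ne_nil _ _))
    rw [← inv_mul_cancel_left h (y :: t₂).prod, ← heq, List.prod_nil, mul_one]
    exact inv_mem hh
  | x :: t₁, [], h, h₁, _, hh, heq =>
    absurd (by simpa [heq] using hh) (h₁.prod_notMem_inf amalg (List.cons_ne_nil _ _))
  | x :: t₁, y :: t₂, h, h₁, h₂, hh, heq =>
    .cons hh <| interleaved_of_prod_eq amalg h₁.of_cons.2.2 h₂.of_cons.2.2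
      (inv_mul_mul_mem_inf amalg h₁ h₂ hh heq) (by
        simp only [List.prod_cons] at heq
        rw [mul_assoc, mul_assoc, ← heq]
        group)

end IsReducedWord

namespace Interleaved

theorem refl : ∀ l : List M, Interleaved H 1 l l
  | [] => .nil
  | x :: l => .cons (one_mem H) (by simpa using refl l)

theorem length_eq {h : M} {l₁ l₂ : List M} (hI : Interleaved H h l₁ l₂) :
    l₁.length = l₂.length := by
  induction hI with
  | nil => rfl
  | cons _ _ ih => simp [ih]

theorem exists_seq {h : M} {l₁ l₂ : List M} (hI : Interleaved H h l₁ l₂) :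
    ∃ hs : ℕ → M, hs 0 = h ∧ hs l₁.length = 1 ∧ (∀ i ≤ l₁.length, hs i ∈ H) ∧
      ∀ i < l₁.length, l₂.getD i 1 = (hs i)⁻¹ * l₁.getD i 1 * hs (i + 1) := by
  induction hI with
  | nil => exact ⟨fun _ => 1, rfl, rfl, fun _ _ => one_mem H, by simp⟩
  | @cons h x y l₁ l₂ hh _ ih =>
    obtain ⟨hs, h0, hlast, hmem, hrel⟩ := ih
    refine ⟨fun | 0 => h | i + 1 => hs i, rfl, hlast, ?_, ?_⟩
    · rintro (_ | i) hi
      · exact hh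
      · exact hmem i (by simpa using hi)
    · rintro (_ | i) hi
      · simp only [List.getD_cons_zero, h0]
        group
      · exact hrel i (by simpa using hi)

end Interleaved

namespace IsCanonicalForm

theorem ne_nil {l : List M} (h : IsCanonicalForm K L l) : l ≠ [] := by
  rintro rfl
  simp [IsCanonicalForm] at h

theorem isReducedWord_or {l : List M} (h : IsCanonicalForm K L l) :
    IsReducedWord K L l ∨ ∃ x ∈ K ⊓ L, l = [x] := by
  obtain ⟨hmem, hlen | ⟨-, hnot, halt⟩⟩ := h
  · obtain ⟨x, rfl⟩ := List.length_eq_one_iff.1 hlen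
    by_cases hx : x ∈ K ⊓ L
    · exact .inr ⟨x, hx, rfl⟩
    · have hxKL := hmem x List.mem_cons_self
      refine .inl (.cons ?_ (by simp) ⟨by simp, .nil⟩)
      grind [Subgroup.mem_inf, SetLike.mem_coe]
  · refine .inl ⟨fun x hx => ?_, List.isChain_iff_getElem.2 fun i hi => ?_⟩
    · have := hmem x hx
      have := hnot x hx
      grind [Subgroup.mem_inf, SetLike.mem_coe]
    · have hi' := halt i hi
      have hnext := hnot _ (List.getElem_mem hi)
      rw [List.getD_eq_getElem _ _ (by omega), List.getD_eq_getElem _ _ hi] at hi'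
      grind [Subgroup.mem_inf, SetLike.mem_coe]

theorem interleaved_of_prod_eq (amalg : IsAmalgam K L) {l₁ l₂ : List M}
    (h₁ : IsCanonicalForm K L l₁) (h₂ : IsCanonicalForm K L l₂) (heq : l₁.prod = l₂.prod) :
    Interleaved (K ⊓ L) 1 l₁ l₂ := by
  obtain hr₁ | ⟨x, hx, rfl⟩ := h₁.isReducedWord_or <;>
    obtain hr₂ | ⟨y, hy, rfl⟩ := h₂.isReducedWord_or
  · exact hr₁.interleaved_of_prod_eq amalg hr₂ (one_mem _) (by rw [heq, one_mul])
  · exact absurd (by simpa [heq] using hy) (hr₁.prod_notMem_inf amalg h₁.ne_nil)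
  · exact absurd (by simpa [← heq] using hx) (hr₂.prod_notMem_inf amalg h₂.ne_nil)
  · obtain rfl : x = y := by simpa using heq
    exact .refl _

end IsCanonicalForm

end ReducedWords

/-- Uniqueness of canonical forms in an amalgamated free product: two canonical forms
representing the same element have the same length, and their entries agree up to an
interleaving sequence `h₀ = 1, h₁, …, h_{n-1}, h_n = 1` of elements of `H = K ⊓ L`,
namely `g**_i = h_i⁻¹ g*_i h_{i+1}` for every `i < n`. -/
theorem canonicalForm_unique {M : Type*} [Group M] (K L : Subgroup M)
    (amalg : IsAmalgam K L) (l₁ l₂ : List M)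
    (h₁ : IsCanonicalForm K L l₁) (h₂ : IsCanonicalForm K L l₂)
    (heq : l₁.prod = l₂.prod) :
    l₁.length = l₂.length ∧
      ∃ hs : ℕ → M, hs 0 = 1 ∧ hs l₁.length = 1 ∧ (∀ i ≤ l₁.length, hs i ∈ K ⊓ L) ∧
        ∀ i < l₁.length, l₂.getD i 1 = (hs i)⁻¹ * l₁.getD i 1 * hs (i + 1) := by
  have hI := IsCanonicalForm.interleaved_of_prod_eq amalg h₁ h₂ heq
  exact ⟨hI.length_eq, hI.exists_seq⟩
end

section
/- Let n be a positive integer and let G be a nontrivial group of infinite cardinality κ such that: (i) G is n-Shelah; and (ii) every subset S ⊆ G with |S| < κ is contained in a subgroup H ≤ G with |H| < κ for which there exists g ∈ G with gHg⁻¹ ∩ H = {1}. Then every T₁ topology on G making G a topological group is the discrete topology. -/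
open Cardinal Set

/-- A group `G` of infinite cardinality is `n`-Shelah if for every subset `X ⊆ G` of full
cardinality, every element of `G` is a product of exactly `n` elements of `X`. -/
def IsNShelah (G : Type*) [Group G] (n : ℕ) : Prop :=
  ∀ X : Set G, #X = #G → ∀ g : G, ∃ f : Fin n → G, (∀ i, f i ∈ X) ∧ (List.ofFn f).prod = g

/-!
In a nontrivial `T₁` group topology pick `a ≠ 1` and a neighbourhood `V` of `1`
whose `n`-fold products avoid `a`. Since `G` is `n`-Shelah, `|V| < |G|`, so `V` lies in a subgroup
`H` with `gHg⁻¹ ∩ H = {1}`. Then `H` is an open subgroup, hence so is `gHg⁻¹`, and `{1}` is open.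
-/

open Filter Topology

lemma IsNShelah.mk_lt_of_forall_prod_ne {G : Type*} [Group G] {n : ℕ} (h : IsNShelah G n)
    {X : Set G} {a : G} (ha : ∀ f : Fin n → G, (∀ i, f i ∈ X) → (List.ofFn f).prod ≠ a) :
    #X < #G := by
  refine (mk_set_le X).lt_of_ne fun hX => ?_
  obtain ⟨f, hfX, hfa⟩ := h X hX a
  exact ha f hfX hfa

section TopologicalGroup

variable {G : Type*} [Group G] [TopologicalSpace G] [IsTopologicalGroup G]

lemma exists_mem_nhds_one_listProd_ofFn_mem (n : ℕ) {U : Set G} (hU : U ∈ 𝓝 1) :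
    ∃ V ∈ 𝓝 (1 : G), ∀ f : Fin n → G, (∀ i, f i ∈ V) → (List.ofFn f).prod ∈ U := by
  induction n generalizing U with
  | zero => exact ⟨univ, univ_mem, fun _ _ => by simpa using mem_of_mem_nhds hU⟩
  | succ n ih =>
    obtain ⟨W, hW, hWW⟩ := exists_nhds_one_split hU
    obtain ⟨V, hV, hVW⟩ := ih hW
    refine ⟨V ∩ W, inter_mem hV hW, fun f hf => ?_⟩
    rw [List.ofFn_succ, List.prod_cons]
    exact hWW _ (hf 0).2 _ (hVW _ fun i => (hf i.succ).1)

lemma discreteTopology_of_conj_image_inter_eq_one {H : Subgroup G} (hH : (H : Set G) ∈ 𝓝 1)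
    {g : G} (hg : (fun x => g * x * g⁻¹) '' (H : Set G) ∩ (H : Set G) = {1}) :
    DiscreteTopology G := by
  have hHo : IsOpen (H : Set G) := H.isOpen_of_mem_nhds hH
  have hconj : IsOpenMap fun x : G => g * x * g⁻¹ :=
    (isOpenMap_mul_right g⁻¹).comp (isOpenMap_mul_left g)
  rw [discreteTopology_iff_isOpen_singleton_one, ← hg]
  exact (hconj _ hHo).inter hHo

end TopologicalGroup

theorem t1_group_topology_discrete_general (n : ℕ) (G : Type*) [Group G] [Nontrivial G]
    (hShelah : IsNShelah G n)
    (hcover : ∀ S : Set G, #S < #G → ∃ H : Subgroup G, S ⊆ (H : Set G) ∧ #(H : Set G) < #G ∧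
      ∃ g : G, (fun x => g * x * g⁻¹) '' (H : Set G) ∩ (H : Set G) = {1}) :
    ∀ t : TopologicalSpace G, @T1Space G t → @IsTopologicalGroup G t _ → t = ⊥ := by
  intro t _ _
  obtain ⟨a, ha⟩ := exists_ne (1 : G)
  obtain ⟨V, hV, hVa⟩ :=
    exists_mem_nhds_one_listProd_ofFn_mem n (isOpen_compl_singleton.mem_nhds ha.symm)
  obtain ⟨H, hVH, -, g, hg⟩ := hcover V (hShelah.mk_lt_of_forall_prod_ne hVa)
  have := discreteTopology_of_conj_image_inter_eq_one (mem_of_superset hV hVH) hg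
  exact DiscreteTopology.eq_bot

/-- Let `n` be a positive integer and `G` a nontrivial group of infinite cardinality that is
`n`-Shelah and in which every subset of size less than `|G|` is contained in a subgroup `H` of
size less than `|G|` admitting an element `g` with `gHg⁻¹ ∩ H = {1}`. Then every `T₁` group
topology on `G` is discrete. -/
theorem t1_group_topology_discrete (n : ℕ) (hn : 0 < n) (G : Type*) [Group G] [Nontrivial G]
    (hinf : ℵ₀ ≤ #G) (hShelah : IsNShelah G n)
    (hcover : ∀ S : Set G, #S < #G → ∃ H : Subgroup G, S ⊆ (H : Set G) ∧ #(H : Set G) < #G ∧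
      ∃ g : G, (fun x => g * x * g⁻¹) '' (H : Set G) ∩ (H : Set G) = {1}) :
    ∀ t : TopologicalSpace G, @T1Space G t → @IsTopologicalGroup G t _ → t = ⊥ :=
  t1_group_topology_discrete_general n G hShelah hcover
end

section
/- Let n be a positive integer and let κ be an infinite cardinal such that for every finite set F and every coloring c : [κ]ⁿ → F there exists Z ⊆ κ with |Z| = κ on which c is constant (where [κ]ⁿ denotes the n-element subsets of κ). Then no group of cardinality κ is n-Shelah. -/
open Cardinal Set

/-- Let `n` be a positive integer and `κ` an infinite cardinal such that every coloring of the
`n`-element subsets of `κ` in finitely many colors admits a homogeneous set of full size.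
Then no group of cardinality `κ` is `n`-Shelah. -/
theorem no_shelah_group_of_ramsey (n : ℕ) (hn : 0 < n) (κ : Cardinal.{0}) (hκ : ℵ₀ ≤ κ)
    (hRamsey : ∀ (F : Type) (_ : Finite F) (c : Finset Ordinal → F),
      ∃ Z : Set Ordinal, Z ⊆ Set.Iio κ.ord ∧ #Z = Cardinal.lift.{1} κ ∧
        ∀ s t : Finset Ordinal, ↑s ⊆ Z → ↑t ⊆ Z → s.card = n → t.card = n → c s = c t) :
    ∀ (G : Type) (hG : Group G), #G = κ → ¬ @IsNShelah G hG n := by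
  intro G hG hGκ hShelah
  classical
  -- a bijection between the ordinals below `κ.ord` and `G`
  have hIio : #(Set.Iio κ.ord) = Cardinal.lift.{1} κ := by
    rw [Ordinal.mk_Iio_ordinal, Cardinal.card_ord]
  obtain ⟨e⟩ : Nonempty (↥(Set.Iio κ.ord) ≃ G) := by
    rw [← Cardinal.lift_mk_eq', hIio, ← hGκ]
    simp
  -- total enumeration function
  set g : Ordinal → G := fun α => if h : α ∈ Set.Iio κ.ord then e ⟨α, h⟩ else 1 with hg
  have hginj : Set.InjOn g (Set.Iio κ.ord) := by
    intro a ha b hb hab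
    simp only [hg, dif_pos ha, dif_pos hb] at hab
    simpa using Subtype.ext_iff.mp (e.injective hab)
  -- the target ordinals : the naturals `0, 1, ..., n^n`
  have hnat : ∀ i : Fin (n ^ n + 1), ((i : ℕ) : Ordinal) ∈ Set.Iio κ.ord := by
    intro i
    exact lt_of_lt_of_le (Ordinal.nat_lt_omega0 _)
      (by rw [← Cardinal.ord_aleph0]; exact Cardinal.ord_le_ord.2 hκ)
  -- the word evaluation function
  set w : Finset Ordinal → (Fin n → Fin n) → G := fun s u =>
    (List.ofFn fun j => g ((s.sort (· ≤ ·)).getD (u j) 0)).prod with hw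
  -- the coloring
  set c : Finset Ordinal → ((Fin n → Fin n) → Fin (n ^ n + 1) → Bool) := fun s u i =>
    decide (w s u = g ((i : ℕ) : Ordinal)) with hc
  obtain ⟨Z, hZsub, hZcard, hZhom⟩ := hRamsey _ inferInstance c
  have hZinf : Z.Infinite := by
    rw [← Set.infinite_coe_iff, Cardinal.infinite_iff, hZcard, ← Cardinal.lift_aleph0.{1, 0}]
    exact Cardinal.lift_le.2 hκ
  -- the subset `X = g '' Z` has full cardinality
  have hXcard : #(g '' Z) = #G := by
    have h1 : Cardinal.lift.{1} #(g '' Z) = Cardinal.lift.{0} #Z :=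
      Cardinal.mk_image_eq_of_injOn_lift g Z (hginj.mono hZsub)
    rw [Cardinal.lift_id', hZcard] at h1
    rw [hGκ]
    exact Cardinal.lift_injective h1
  -- apply the Shelah property to each target
  have hrep : ∀ i : Fin (n ^ n + 1), ∃ f : Fin n → G,
      (∀ j, f j ∈ g '' Z) ∧ (List.ofFn f).prod = g ((i : ℕ) : Ordinal) :=
    fun i => hShelah (g '' Z) hXcard _
  choose f hfmem hfprod using hrep
  -- pick the ordinals indexing the factors
  have hβ : ∀ i j, ∃ β, β ∈ Z ∧ g β = f i j := by
    intro i j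
    obtain ⟨β, hβZ, hβeq⟩ := hfmem i j
    exact ⟨β, hβZ, hβeq⟩
  choose β hβZ hβeq using hβ
  -- pad the supports to `n`-element subsets of `Z`
  have hpad : ∀ i, ∃ t : Finset Ordinal, (∀ j, β i j ∈ t) ∧ ↑t ⊆ Z ∧ t.card = n := by
    intro i
    have : Infinite ↥Z := hZinf.to_subtype
    set β' : Fin n → ↥Z := fun j => ⟨β i j, hβZ i j⟩ with hβ'
    obtain ⟨t', ht'sub, ht'card⟩ :=
      Infinite.exists_superset_card_eq (Finset.univ.image β') n
        (le_trans Finset.card_image_le (by simp))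
    refine ⟨t'.image (Subtype.val), ?_, ?_, ?_⟩
    · intro j
      exact Finset.mem_image.2 ⟨β' j, ht'sub (Finset.mem_image.2 ⟨j, Finset.mem_univ _, rfl⟩), rfl⟩
    · intro x hx
      obtain ⟨y, _, rfl⟩ := Finset.mem_image.1 hx
      exact y.2
    · rw [Finset.card_image_of_injective _ Subtype.coe_injective, ht'card]
  choose t htmem htsub htcard using hpad
  -- the word patterns
  have hu : ∀ i j, ((t i).sort (· ≤ ·)).idxOf (β i j) < n := by
    intro i j
    have hmem : β i j ∈ (t i).sort (· ≤ ·) := (Finset.mem_sort _).2 (htmem i j)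
    have := List.idxOf_lt_length_iff.2 hmem
    rwa [Finset.length_sort, htcard] at this
  set u : Fin (n ^ n + 1) → Fin n → Fin n := fun i j =>
    ⟨((t i).sort (· ≤ ·)).idxOf (β i j), hu i j⟩ with huu
  -- key computation : `w (t i) (u i)` equals the `i`-th target
  have hkey : ∀ i, w (t i) (u i) = g ((i : ℕ) : Ordinal) := by
    intro i
    have hval : ∀ j, ((t i).sort (· ≤ ·)).getD (u i j) 0 = β i j := by
      intro j
      have hlt : ((t i).sort (· ≤ ·)).idxOf (β i j) < ((t i).sort (· ≤ ·)).length :=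
        List.idxOf_lt_length_iff.2 ((Finset.mem_sort _).2 (htmem i j))
      simp only [huu]
      rw [List.getD_eq_getElem _ _ hlt]
      exact List.getElem_idxOf hlt
    rw [← hfprod i]
    simp only [hw]
    exact congrArg List.prod (congrArg List.ofFn (funext fun j => by rw [hval, hβeq]))
  -- pigeonhole on the word patterns
  have hcardlt : Fintype.card (Fin n → Fin n) < Fintype.card (Fin (n ^ n + 1)) := by
    simp [Fintype.card_fun]
  obtain ⟨i, j, hij, huij⟩ := Fintype.exists_ne_map_eq_of_card_lt u hcardlt
  -- homogeneity transfers the value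
  have hhom := hZhom (t i) (t j) (htsub i) (htsub j) (htcard i) (htcard j)
  have h1 : c (t i) (u i) i = c (t j) (u i) i := by rw [hhom]
  rw [hc] at h1
  simp only [decide_eq_decide] at h1
  have h2 : w (t j) (u i) = g ((i : ℕ) : Ordinal) := h1.mp (hkey i)
  rw [huij, hkey j] at h2
  have h3 : ((j : ℕ) : Ordinal) = ((i : ℕ) : Ordinal) := hginj (hnat j) (hnat i) h2
  have h4 : (j : ℕ) = (i : ℕ) := by exact_mod_cast h3
  exact hij (Fin.val_injective h4.symm)
end

section
/- There is no Shelah group of cardinality ℵ₀: for every positive integer n, no countably infinite group is n-Shelah. -/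
open Cardinal

/-!
Thin out ℕ, viewed through an injection `y : ℕ → G`, by the infinite Ramsey theorem: on the
resulting infinite set `B`, for each of finitely many targets `g` and each pattern
`σ : Fin n → Fin n`, whether `y (s (σ 0)) ⋯ y (s (σ (n-1))) = g` is the same for all increasing
tuples `s` in `B`. The Shelah property applied to `y '' B` makes every target the product of some
pattern, and sorting the indices of that product shows it is then the product of that pattern
for every increasing tuple. With `n ^ n + 1` targets and only `n ^ n` patterns, two distinct
targets share a pattern and hence coincide.
-/

theorem Set.Infinite.exists_strictMono_comp_eq {α : Type*} [LinearOrder α] {B : Set α}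
    (hB : B.Infinite) {n : ℕ} (a : Fin n → α) (ha : ∀ i, a i ∈ B) :
    ∃ s : Fin n → α, StrictMono s ∧ (∀ i, s i ∈ B) ∧ ∃ σ : Fin n → Fin n, s ∘ σ = a := by
  have : Infinite B := hB.to_subtype
  let a' : Fin n → B := fun i => ⟨a i, ha i⟩
  obtain ⟨T, haT, hT⟩ := Infinite.exists_superset_card_eq (Finset.univ.image a') n
    (Finset.card_image_le.trans (by simp))
  refine ⟨fun i => T.orderEmbOfFin hT i,
    (Subtype.strictMono_coe _).comp (T.orderEmbOfFin hT).strictMono,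
    fun i => (T.orderEmbOfFin hT i).2,
    fun i => (T.orderIsoOfFin hT).symm ⟨a' i, haT (by simp)⟩, ?_⟩
  funext i
  simp [← Finset.coe_orderIsoOfFin_apply, a']

theorem Set.Infinite.exists_infinite_homogeneous_subset {K : Type*} [Finite K] (m : ℕ)
    (C : (Fin m → ℕ) → K) {A : Set ℕ} (hA : A.Infinite) :
    ∃ B ⊆ A, B.Infinite ∧ ∃ k, ∀ s : Fin m → ℕ, StrictMono s → (∀ i, s i ∈ B) → C s = k := by
  induction m generalizing A with
  | zero =>
    exact ⟨A, subset_rfl, hA, C default, fun s _ _ => by rw [Subsingleton.elim s default]⟩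
  | succ m ih =>
    have step : ∀ A' : Set ℕ, A'.Infinite → ∃ B' ⊆ A', B'.Infinite ∧ (∀ b ∈ B', sInf A' < b) ∧
        ∃ k, ∀ s : Fin m → ℕ, StrictMono s → (∀ i, s i ∈ B') → C (Fin.cons (sInf A') s) = k := by
      intro A' hA'
      obtain ⟨B', hB'A, hB', k, hk⟩ :=
        ih (fun s => C (Fin.cons (sInf A') s)) (hA'.sdiff (Set.finite_singleton (sInf A')))
      refine ⟨B', hB'A.trans Set.sdiff_subset, hB', fun b hb => ?_, k, hk⟩
      obtain ⟨hbA, hb⟩ := hB'A hb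
      exact (Nat.sInf_le hbA).lt_of_ne (Ne.symm hb)
    have : Nonempty K := ⟨C default⟩
    choose! next hnext_sub hnext_inf hnext_gt col hcol using step
    -- Iterating `step` yields `a i := sInf (S i)` with `a j ∈ next (S i)` for all `j > i`,
    -- so the colour of a tuple in `range a` only depends on its first entry.
    let S : ℕ → Set ℕ := fun i => next^[i] A
    have hS_inf : ∀ i, (S i).Infinite := fun i => by
      induction i with
      | zero => exact hA
      | succ i hi => simpa [S, Function.iterate_succ_apply'] using hnext_inf _ hi
    have hS_succ : ∀ i, S (i + 1) = next (S i) := fun i => Function.iterate_succ_apply' _ _ _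
    have hS_anti : Antitone S :=
      antitone_nat_of_succ_le fun i => (hS_succ i).symm ▸ hnext_sub _ (hS_inf i)
    let a : ℕ → ℕ := fun i => sInf (S i)
    have ha_mem : ∀ i, a i ∈ S i := fun i => Nat.sInf_mem (hS_inf i).nonempty
    have ha_lt : ∀ {i j}, i < j → a j ∈ next (S i) ∧ a i < a j := fun {i j} hij => by
      have hj : a j ∈ next (S i) := hS_succ i ▸ hS_anti hij (ha_mem j)
      exact ⟨hj, hnext_gt _ (hS_inf i) _ hj⟩
    have ha_mono : StrictMono a := fun i j hij => (ha_lt hij).2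
    obtain ⟨k, hk⟩ := Finite.exists_infinite_fiber fun i => col (S i)
    refine ⟨a '' (col ∘ S ⁻¹' {k}), ?_,
      (Set.infinite_coe_iff.mp hk).image ha_mono.injective.injOn, k, fun s hs hsB => ?_⟩
    · rintro _ ⟨i, -, rfl⟩
      exact hS_anti (Nat.zero_le i) (ha_mem i)
    obtain ⟨i, hik, hi⟩ := hsB 0
    have htail : ∀ j, Fin.tail s j ∈ next (S i) := fun j => by
      obtain ⟨i', -, hi'⟩ := hsB j.succ
      have : a i < a i' := hi ▸ hi' ▸ hs (Fin.succ_pos j)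
      simpa only [Fin.tail, ← hi'] using (ha_lt (ha_mono.lt_iff_lt.mp this)).1
    rw [← Fin.cons_self_tail s, ← hi, ← hik]
    exact hcol _ (hS_inf i) _ (hs.comp Fin.strictMono_succ) htail

theorem IsNShelah.exists_prod_eq_of_infinite {G : Type*} [Group G] {n : ℕ} (hG : #G = ℵ₀)
    (hS : IsNShelah G n) {X : Set G} (hX : X.Infinite) (g : G) :
    ∃ f : Fin n → G, (∀ i, f i ∈ X) ∧ (List.ofFn f).prod = g := by
  have : Countable G := Cardinal.mk_le_aleph0_iff.mp hG.le
  have : Infinite X := hX.to_subtype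
  exact hS X (by rw [hG, Cardinal.mk_eq_aleph0]) g

theorem IsNShelah.exists_infinite_pattern {G : Type*} [Group G] {n : ℕ} (hG : #G = ℵ₀)
    (hS : IsNShelah G n) {y : ℕ → G} (hy : Function.Injective y) {ι : Type*} [Finite ι]
    (t : ι → G) :
    ∃ B : Set ℕ, B.Infinite ∧ ∃ σ : ι → Fin n → Fin n, ∀ i, ∀ s : Fin n → ℕ, StrictMono s →
      (∀ j, s j ∈ B) → (List.ofFn (y ∘ s ∘ σ i)).prod = t i := by
  obtain ⟨B, -, hB, k, hk⟩ := Set.infinite_univ.exists_infinite_homogeneous_subset n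
    (fun s i => {σ : Fin n → Fin n | (List.ofFn (y ∘ s ∘ σ)).prod = t i})
  have hk_ne : ∀ i, (k i).Nonempty := fun i => by
    obtain ⟨f, hfB, hf⟩ := hS.exists_prod_eq_of_infinite hG (hB.image hy.injOn) (t i)
    choose a haB hay using hfB
    obtain ⟨s, hs, hsB, σ, rfl⟩ := hB.exists_strictMono_comp_eq a haB
    refine ⟨σ, ?_⟩
    rw [← hk s hs hsB]
    exact (congrArg (fun f => (List.ofFn f).prod) (funext hay)).trans hf
  choose σ hσ using hk_ne
  exact ⟨B, hB, σ, fun i s hs hsB => by simpa [← hk s hs hsB] using hσ i⟩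

/-- There is no Shelah group of cardinality `ℵ₀`: for every positive integer `n`, no countably
infinite group is `n`-Shelah. -/
theorem no_countable_shelah_group (G : Type*) [Group G] (hG : #G = ℵ₀) :
    ∀ n : ℕ, 0 < n → ¬ IsNShelah G n := by
  intro n _ hS
  have : Infinite G := Cardinal.infinite_iff.mpr hG.ge
  let y := Infinite.natEmbedding G
  obtain ⟨B, hB, σ, hσ⟩ :=
    hS.exists_infinite_pattern hG y.injective fun i : Fin (n ^ n + 1) => y i
  obtain ⟨i, i', hii', hσii'⟩ := Fintype.exists_ne_map_eq_of_card_lt σ (by simp)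
  obtain ⟨b, hb⟩ := hB.nonempty
  obtain ⟨s, hs, hsB, -⟩ := hB.exists_strictMono_comp_eq (fun _ : Fin n => b) fun _ => hb
  have : y i = y i' := by rw [← hσ i s hs hsB, ← hσ i' s hs hsB, hσii']
  exact hii' (Fin.ext (y.injective this))
end
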